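/- arXiv:1506.02578 — 3 statements merged into one kernel-verified Lean document; each statement's English description precedes it below -/
import Mathlib

section
/- The function h(x) = sign(x)·( (1/√2)·arcsin( (3(1−√(1−x²))−2)/(√(1−x²)+1) ) + π/2^{3/2} ) satisfies |h'(x)| = ((1−x²)² + (1−x²)^{3/2})^{−1/2} for all x ∈ (−1,1). -/
/-!
Write `s = √(1 - x²) ∈ (0, 1]`, so that `h x = sign x · F s` with
`F s = arcsin ((1 - 3s)/(1 + s)) / √2 + π / 2^{3/2}`.
Since `1 - ((1 - 3s)/(1 + s))² = 8s(1 - s)/(1 + s)²`, `F'(s) = -1 / ((1 + s) √(s(1 - s)))`, and with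
`ds/dx = -x/s` and `x² = (1 - s)(1 + s)` the chain rule gives `h'(x) = (s⁴ + s³)^{-1/2}` for `x ≠ 0`,
the sign cancelling that of `x`. At `x = 0` we have `F 1 = 0`, so `h` is continuous there, and as the
derivative extends continuously to `0`, `h` is differentiable at `0` with the same formula.
-/

noncomputable def h (x : ℝ) : ℝ :=
  Real.sign x * ((1 / Real.sqrt 2) *
      Real.arcsin ((3 * (1 - Real.sqrt (1 - x ^ 2)) - 2) / (Real.sqrt (1 - x ^ 2) + 1))
    + Real.pi / (2 : ℝ) ^ ((3 : ℝ) / 2))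

open Filter Topology Real Set

theorem hasDerivAt_of_eventually_hasDerivAt_of_ne {E : Type*} [NormedAddCommGroup E]
    [NormedSpace ℝ E] {f g : ℝ → E} {x : ℝ} (f_diff : ∀ᶠ y in 𝓝[≠] x, HasDerivAt f (g y) y)
    (hf : ContinuousAt f x) (hg : ContinuousAt g x) : HasDerivAt f (g x) x := by
  have diff : DifferentiableOn ℝ f {y | HasDerivAt f (g y) y} := fun y hy =>
    hy.differentiableAt.differentiableWithinAt
  have lim : Tendsto (deriv f) (𝓝[≠] x) (𝓝 (g x)) :=
    (hg.tendsto.mono_left nhdsWithin_le_nhds).congr' (f_diff.mono fun y hy => hy.deriv.symm)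
  have right : HasDerivWithinAt f (g x) (Ici x) x :=
    hasDerivWithinAt_Ici_of_tendsto_deriv diff hf.continuousWithinAt
      (nhdsGT_le_nhdsNE x f_diff) (lim.mono_left (nhdsGT_le_nhdsNE x))
  have left : HasDerivWithinAt f (g x) (Iic x) x :=
    hasDerivWithinAt_Iic_of_tendsto_deriv diff hf.continuousWithinAt
      (nhdsLT_le_nhdsNE x f_diff) (lim.mono_left (nhdsLT_le_nhdsNE x))
  simpa using left.union right

theorem Real.abs_sign_le_one (x : ℝ) : |Real.sign x| ≤ 1 := by
  rcases Real.sign_apply_eq x with h | h | h <;> simp [h]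

theorem continuousAt_sign_mul {f : ℝ → ℝ} {a : ℝ} (hf : ContinuousAt f a) (ha : f a = 0) :
    ContinuousAt (fun x => Real.sign x * f x) a := by
  rw [ContinuousAt, ha, mul_zero]
  rw [ContinuousAt, ha] at hf
  refine squeeze_zero_norm (fun x => ?_) (by simpa using hf.norm)
  rw [norm_mul]
  exact mul_le_of_le_one_left (norm_nonneg _) (Real.abs_sign_le_one x)

theorem eventually_sign_eq {y : ℝ} (hy : y ≠ 0) : ∀ᶠ z in 𝓝 y, sign z = sign y := by
  rcases hy.lt_or_gt with hneg | hpos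
  · filter_upwards [Iio_mem_nhds hneg] with z hz
    rw [sign_of_neg hz, sign_of_neg hneg]
  · filter_upwards [Ioi_mem_nhds hpos] with z hz
    rw [sign_of_pos hz, sign_of_pos hpos]

noncomputable def hCore (s : ℝ) : ℝ :=
  (1 / √2) * arcsin ((3 * (1 - s) - 2) / (s + 1)) + π / (2 : ℝ) ^ ((3 : ℝ) / 2)

theorem h_eq_sign_mul_hCore (x : ℝ) : h x = sign x * hCore √(1 - x ^ 2) := rfl

theorem two_rpow_three_halves : (2 : ℝ) ^ ((3 : ℝ) / 2) = 2 * √2 := by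
  rw [show (3 : ℝ) / 2 = 1 + 1 / 2 by norm_num, rpow_add two_pos, rpow_one, ← sqrt_eq_rpow]

theorem hCore_one : hCore 1 = 0 := by
  rw [hCore, two_rpow_three_halves]
  norm_num
  field_simp
  ring

theorem one_sub_sq_hCore_arg {s : ℝ} (hs : s + 1 ≠ 0) :
    1 - ((3 * (1 - s) - 2) / (s + 1)) ^ 2 = 8 * s * (1 - s) / (s + 1) ^ 2 := by
  field_simp
  ring

theorem hasDerivAt_hCore {s : ℝ} (hs0 : 0 < s) (hs1 : s < 1) :
    HasDerivAt hCore (-1 / ((1 + s) * √(s * (1 - s)))) s := by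
  have hs : s + 1 ≠ 0 := by positivity
  have hq : HasDerivAt (fun t => (3 * (1 - t) - 2) / (t + 1)) (-4 / (s + 1) ^ 2) s := by
    have := ((((hasDerivAt_id' s).const_sub 1).const_mul 3).sub_const 2).div
      ((hasDerivAt_id' s).add_const 1) hs
    refine this.congr_deriv ?_
    field_simp
    ring
  have hpos : 0 < 1 - ((3 * (1 - s) - 2) / (s + 1)) ^ 2 := by
    rw [one_sub_sq_hCore_arg hs]
    have : 0 < 1 - s := by linarith
    positivity
  have hq1 : (3 * (1 - s) - 2) / (s + 1) ≠ -1 := fun heq => by norm_num [heq] at hpos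
  have hq2 : (3 * (1 - s) - 2) / (s + 1) ≠ 1 := fun heq => by norm_num [heq] at hpos
  have := (((hasDerivAt_arcsin hq1 hq2).comp s hq).const_mul (1 / √2)).add_const
    (π / (2 : ℝ) ^ ((3 : ℝ) / 2))
  refine this.congr_deriv ?_
  rw [one_sub_sq_hCore_arg hs, sqrt_div' _ (sq_nonneg _), sqrt_sq (by positivity),
    show 8 * s * (1 - s) = 2 ^ 2 * 2 * (s * (1 - s)) by ring, sqrt_mul' _ (by nlinarith),
    sqrt_mul' _ (by norm_num), sqrt_sq (by norm_num)]
  have : 0 < √(s * (1 - s)) := sqrt_pos.2 (by nlinarith)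
  field_simp
  rw [sq_sqrt (by norm_num)]
  ring

theorem hasDerivAt_sqrt_one_sub_sq {y : ℝ} (hy : y ^ 2 < 1) :
    HasDerivAt (fun z => √(1 - z ^ 2)) (-y / √(1 - y ^ 2)) y := by
  refine (((hasDerivAt_pow 2 y).const_sub 1).sqrt (by linarith)).congr_deriv ?_
  field_simp
  ring

theorem rpow_three_halves_eq_sqrt_pow {t : ℝ} (ht : 0 ≤ t) : t ^ ((3 : ℝ) / 2) = √t ^ 3 := by
  rw [sqrt_eq_rpow, ← rpow_natCast, ← rpow_mul ht]
  norm_num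

theorem sq_rpow_neg_half {t : ℝ} (ht : 0 ≤ t) : (t ^ (-(1 : ℝ) / 2)) ^ 2 = t⁻¹ := by
  rw [← rpow_natCast, ← rpow_mul ht]
  norm_num [rpow_neg_one]

theorem sqrt_one_sub_sq_mem_Ioo {y : ℝ} (hy : y ∈ Ioo (-1 : ℝ) 1) (hy0 : y ≠ 0) :
    √(1 - y ^ 2) ∈ Ioo 0 1 := by
  have hy2 : 0 < y ^ 2 := by positivity
  exact ⟨sqrt_pos.2 (by nlinarith [hy.1, hy.2]), (sqrt_lt' one_pos).2 (by linarith)⟩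

theorem sign_sq_of_ne_zero {y : ℝ} (hy : y ≠ 0) : sign y ^ 2 = 1 := by
  rcases sign_apply_eq_of_ne_zero y hy with h | h <;> simp [h]

theorem sign_mul_deriv_hCore_sqrt_eq {y : ℝ} (hy : y ∈ Ioo (-1 : ℝ) 1) (hy0 : y ≠ 0) :
    sign y * (-1 / ((1 + √(1 - y ^ 2)) * √(√(1 - y ^ 2) * (1 - √(1 - y ^ 2)))) *
      (-y / √(1 - y ^ 2))) =
      ((1 - y ^ 2) ^ 2 + (1 - y ^ 2) ^ ((3 : ℝ) / 2)) ^ (-(1 : ℝ) / 2) := by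
  have hy2 : 0 < 1 - y ^ 2 := by nlinarith [hy.1, hy.2]
  obtain ⟨hs0, hs1⟩ := sqrt_one_sub_sq_mem_Ioo hy hy0
  rw [rpow_three_halves_eq_sqrt_pow hy2.le]
  set s := √(1 - y ^ 2)
  have hs2 : s ^ 2 = 1 - y ^ 2 := sq_sqrt hy2.le
  rw [← hs2]
  have hroot : 0 < √(s * (1 - s)) := sqrt_pos.2 (by nlinarith)
  have hsign : 0 < sign y * y := sign_mul_pos_of_ne_zero y hy0
  refine (sq_eq_sq₀ ?_ ?_).1 ?_
  · rw [show sign y * (-1 / ((1 + s) * √(s * (1 - s))) * (-y / s)) =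
      sign y * y / ((1 + s) * √(s * (1 - s)) * s) by field_simp]
    positivity
  · positivity
  · rw [sq_rpow_neg_half (by positivity)]
    field_simp
    rw [sq_sqrt (by nlinarith), sign_sq_of_ne_zero hy0]
    linear_combination (s * (s + 1)) * hs2

theorem hasDerivAt_h_of_ne_zero {y : ℝ} (hy : y ∈ Ioo (-1 : ℝ) 1) (hy0 : y ≠ 0) :
    HasDerivAt h (((1 - y ^ 2) ^ 2 + (1 - y ^ 2) ^ ((3 : ℝ) / 2)) ^ (-(1 : ℝ) / 2)) y := by
  have hy2 : y ^ 2 < 1 := by nlinarith [hy.1, hy.2]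
  obtain ⟨hs0, hs1⟩ := sqrt_one_sub_sq_mem_Ioo hy hy0
  have hev : h =ᶠ[𝓝 y] fun z => sign y * hCore √(1 - z ^ 2) :=
    (eventually_sign_eq hy0).mono fun z hz => by rw [h_eq_sign_mul_hCore, hz]
  have hcomp := (hasDerivAt_hCore hs0 hs1).comp y (hasDerivAt_sqrt_one_sub_sq hy2)
  have hd := hcomp.const_mul (sign y)
  rw [← sign_mul_deriv_hCore_sqrt_eq hy hy0]
  exact hd.congr_of_eventuallyEq hev

theorem continuousAt_h_zero : ContinuousAt h 0 := by
  have hcore : ContinuousAt hCore 1 := by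
    unfold hCore
    fun_prop (disch := norm_num)
  have hsqrt : ContinuousAt (fun x : ℝ => √(1 - x ^ 2)) 0 := by fun_prop
  have hval : √(1 - (0 : ℝ) ^ 2) = 1 := by norm_num
  exact continuousAt_sign_mul (hcore.comp_of_eq hsqrt hval) ((congrArg hCore hval).trans hCore_one)

theorem hasDerivAt_h {x : ℝ} (hx : x ∈ Ioo (-1 : ℝ) 1) :
    HasDerivAt h (((1 - x ^ 2) ^ 2 + (1 - x ^ 2) ^ ((3 : ℝ) / 2)) ^ (-(1 : ℝ) / 2)) x := by
  rcases eq_or_ne x 0 with rfl | hx0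
  · have hnear : ∀ᶠ y in 𝓝[≠] (0 : ℝ),
        HasDerivAt h (((1 - y ^ 2) ^ 2 + (1 - y ^ 2) ^ ((3 : ℝ) / 2)) ^ (-(1 : ℝ) / 2)) y := by
      filter_upwards [nhdsWithin_le_nhds (Ioo_mem_nhds hx.1 hx.2), self_mem_nhdsWithin]
        with y hy hy0
      exact hasDerivAt_h_of_ne_zero hy hy0
    exact hasDerivAt_of_eventually_hasDerivAt_of_ne hnear continuousAt_h_zero
      (by fun_prop (disch := norm_num))
  · exact hasDerivAt_h_of_ne_zero hx hx0

theorem stmt0 (x : ℝ) (hx : x ∈ Set.Ioo (-1 : ℝ) 1) :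
    |deriv h x| = ((1 - x ^ 2) ^ 2 + (1 - x ^ 2) ^ ((3 : ℝ) / 2)) ^ (-(1 : ℝ) / 2) := by
  have hx2 : 0 < 1 - x ^ 2 := by nlinarith [hx.1, hx.2]
  rw [(hasDerivAt_h hx).deriv, abs_of_pos (by positivity)]
end

section
/- The function g(y) = sign(y)·2^{3/2}·√(1−cos(√2·y))/(3−cos(√2·y)) defined on [−π/√2, π/√2] is the inverse of h(x) = sign(x)·( (1/√2)·arcsin( (3(1−√(1−x²))−2)/(√(1−x²)+1) ) + π/2^{3/2} ) on [−1,1]; i.e., g(h(x)) = x for all x ∈ [−1,1]. -/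
noncomputable def g (y : ℝ) : ℝ :=
  Real.sign y * (2 : ℝ) ^ ((3 : ℝ) / 2) * Real.sqrt (1 - Real.cos (Real.sqrt 2 * y)) /
    (3 - Real.cos (Real.sqrt 2 * y))

theorem stmt1 (x : ℝ) (hx : x ∈ Set.Icc (-1 : ℝ) 1) : g (h x) = x := by
  obtain ⟨hxl, hxr⟩ := hx
  rcases eq_or_ne x 0 with rfl | hx0
  · simp [h, g]
  have hx21 : x ^ 2 ≤ 1 := by nlinarith
  unfold g h
  set s : ℝ := Real.sqrt (1 - x ^ 2) with hsdef
  have hs0 : 0 ≤ s := Real.sqrt_nonneg _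
  have hssq : s ^ 2 = 1 - x ^ 2 := Real.sq_sqrt (by linarith)
  have hs1 : s < 1 := by nlinarith [sq_pos_of_ne_zero hx0]
  have hsp : (0:ℝ) < s + 1 := by linarith
  set a : ℝ := (3 * (1 - s) - 2) / (s + 1) with hadef
  have ha1 : -1 < a := by rw [hadef, lt_div_iff₀ hsp]; nlinarith
  have ha2 : a ≤ 1 := by rw [hadef, div_le_iff₀ hsp]; nlinarith
  set t : ℝ := Real.arcsin a with htdef
  have hsin : Real.sin t = a := Real.sin_arcsin ha1.le ha2
  have htlb : -(Real.pi/2) < t := by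
    calc -(Real.pi/2) = Real.arcsin (-1) := Real.arcsin_neg_one.symm
      _ < t := Real.strictMonoOn_arcsin ⟨le_refl _, by norm_num⟩ ⟨ha1.le, ha2⟩ ha1
  have hr2 : Real.sqrt 2 ^ 2 = 2 := Real.sq_sqrt (by norm_num)
  have hr2p : (0:ℝ) < Real.sqrt 2 := Real.sqrt_pos.mpr (by norm_num)
  have h23 : (2:ℝ) ^ ((3:ℝ)/2) = 2 * Real.sqrt 2 := by
    rw [show ((3:ℝ)/2) = 1 + 1/2 by norm_num, Real.rpow_add (by norm_num),
      Real.rpow_one, ← Real.sqrt_eq_rpow]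
  set c : ℝ := 1 / Real.sqrt 2 * t + Real.pi / (2:ℝ) ^ ((3:ℝ)/2) with hcdef
  have hcpos : 0 < c := by
    rw [hcdef, h23]
    have heq : 1 / Real.sqrt 2 * t + Real.pi / (2 * Real.sqrt 2)
        = (2 * t + Real.pi) / (2 * Real.sqrt 2) := by
      field_simp
    rw [heq]
    exact div_pos (by linarith) (by positivity)
  have hsign : Real.sign (Real.sign x * c) = Real.sign x := by
    rcases lt_or_gt_of_ne hx0 with hneg | hpos
    · rw [Real.sign_of_neg hneg, Real.sign_of_neg (by linarith : (-1:ℝ)*c < 0)]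
    · rw [Real.sign_of_pos hpos, Real.sign_of_pos (by linarith : (0:ℝ) < 1*c)]
  have hr2c : Real.sqrt 2 * c = t + Real.pi/2 := by
    rw [hcdef, h23]; field_simp
  have hcos : Real.cos (Real.sqrt 2 * (Real.sign x * c)) = -a := by
    have harg : Real.sqrt 2 * (Real.sign x * c) = Real.sign x * (t + Real.pi/2) := by
      rw [← hr2c]; ring
    rw [harg]
    rcases lt_or_gt_of_ne hx0 with hneg | hpos
    · rw [Real.sign_of_neg hneg, neg_one_mul, Real.cos_neg, Real.cos_add_pi_div_two, hsin]
    · rw [Real.sign_of_pos hpos, one_mul, Real.cos_add_pi_div_two, hsin]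
  rw [hsign, hcos]
  have h1a : (0:ℝ) ≤ 1 + a := by linarith
  have h3a : (0:ℝ) < 3 + a := by linarith
  have hE : (2:ℝ) ^ ((3:ℝ)/2) * Real.sqrt (1 + a) / (3 + a) = |x| := by
    have hEnn : (0:ℝ) ≤ (2:ℝ) ^ ((3:ℝ)/2) * Real.sqrt (1 + a) / (3 + a) := by positivity
    have key : 8 * (1 + a) = x ^ 2 * (3 + a) ^ 2 := by
      rw [hadef]
      field_simp
      nlinarith [hssq]
    have hsq : ((2:ℝ) ^ ((3:ℝ)/2) * Real.sqrt (1 + a) / (3 + a)) ^ 2 = x ^ 2 := by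
      rw [h23, div_pow, mul_pow, mul_pow, Real.sq_sqrt h1a, hr2]
      rw [div_eq_iff (by positivity)]
      linarith [key]
    rw [← Real.sqrt_sq hEnn, hsq, Real.sqrt_sq_eq_abs]
  calc Real.sign x * (2:ℝ) ^ ((3:ℝ)/2) * Real.sqrt (1 - -a) / (3 - -a)
      = Real.sign x * ((2:ℝ) ^ ((3:ℝ)/2) * Real.sqrt (1 + a) / (3 + a)) := by
        rw [sub_neg_eq_add, sub_neg_eq_add]; ring
    _ = Real.sign x * |x| := by rw [hE]
    _ = x := by
        rcases lt_or_gt_of_ne hx0 with hneg | hpos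
        · rw [Real.sign_of_neg hneg, abs_of_neg hneg]; ring
        · rw [Real.sign_of_pos hpos, abs_of_pos hpos]; ring
end

section
/- Let F₀ be a bivariate elliptical distribution with center 0, equal marginal scales, and generalized correlation coefficient ρ. The spatial sign correlation functional γ applied to S(F₀,0) = [[1/2, δ],[δ, 1/2]] with δ = (1−√(1−ρ²))/(2ρ) (δ=0 for ρ=0) recovers ρ: explicitly, with s₁₁ = 1/2, s₁₂ = δ, d = 1/2 + √((s₁₁−1/2)² + s₁₂²) = 1/2 + |δ|, b = d − s₁₁, c = (2d−1)/(d(1−d)), one has c·s₁₂·b/√((s₁₂² + b²)² + (s₁₂·c·b)²) = ρ. -/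
/-!
For `s₁₁ = 1/2` the estimator has `d = 1/2 + |δ|`, `b = |δ|` and `c b = 2δ² / (1/4 - δ²)`.
Because `(1/4 - δ²)² + δ² = (1/4 + δ²)²`, the square root is rational and, as long as
`|δ| < 1/2`, the estimator collapses to `δ / (1/4 + δ²) = 2x / (1 + x²)` with `x = 2δ`.
Since `x = (1 - √(1 - ρ²)) / ρ` is the tangent half-angle of `ρ = sin θ`, this returns `ρ`.
-/

noncomputable def spatialSignCorr (s₁₁ s₁₂ : ℝ) : ℝ :=
  let d := 1 / 2 + Real.sqrt ((s₁₁ - 1 / 2) ^ 2 + s₁₂ ^ 2)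
  let b := d - s₁₁
  let c := (2 * d - 1) / (d * (1 - d))
  c * s₁₂ * b / Real.sqrt ((s₁₂ ^ 2 + b ^ 2) ^ 2 + (s₁₂ * c * b) ^ 2)

theorem spatialSignCorr_half_of_abs_lt {δ : ℝ} (hδ : |δ| < 1 / 2) :
    spatialSignCorr (1 / 2) δ = δ / (1 / 4 + δ ^ 2) := by
  have hsq : |δ| ^ 2 = δ ^ 2 := sq_abs δ
  have hgap : 0 < 1 / 4 - δ ^ 2 := by nlinarith [abs_nonneg δ]
  have hd : Real.sqrt ((1 / 2 - 1 / 2) ^ 2 + δ ^ 2) = |δ| := by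
    rw [sub_self, zero_pow two_ne_zero, zero_add, Real.sqrt_sq_eq_abs]
  have hcb : (2 * (1 / 2 + |δ|) - 1) / ((1 / 2 + |δ|) * (1 - (1 / 2 + |δ|))) * |δ|
      = 2 * δ ^ 2 / (1 / 4 - δ ^ 2) := by
    rw [div_mul_eq_mul_div, ← hsq]; congr 1 <;> ring
  have hroot : Real.sqrt ((δ ^ 2 + δ ^ 2) ^ 2 + (δ * (2 * δ ^ 2 / (1 / 4 - δ ^ 2))) ^ 2)
      = 2 * δ ^ 2 * (1 / 4 + δ ^ 2) / (1 / 4 - δ ^ 2) := by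
    rw [Real.sqrt_eq_iff_eq_sq (by positivity) (by positivity), mul_div_assoc', div_pow, div_pow,
      eq_div_iff (by positivity), add_mul, div_mul_cancel₀ _ (by positivity)]
    ring
  simp only [spatialSignCorr, hd, add_sub_cancel_left]
  rw [mul_right_comm, mul_assoc δ, hcb, hsq, hroot, div_mul_eq_mul_div,
    div_div_div_cancel_right₀ hgap.ne']
  rcases eq_or_ne δ 0 with rfl | hδ0
  · simp
  · rw [mul_div_mul_left _ _ (by positivity)]

noncomputable def spatialSignCov₁₂ (ρ : ℝ) : ℝ :=
  if ρ = 0 then 0 else (1 - Real.sqrt (1 - ρ ^ 2)) / (2 * ρ)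

theorem four_mul_one_add_sqrt_mul_spatialSignCov₁₂_sq {ρ : ℝ} (hρ : ρ ∈ Set.Ioo (-1 : ℝ) 1) :
    4 * (1 + Real.sqrt (1 - ρ ^ 2)) * spatialSignCov₁₂ ρ ^ 2 = 1 - Real.sqrt (1 - ρ ^ 2) := by
  rcases eq_or_ne ρ 0 with rfl | hρ0
  · simp [spatialSignCov₁₂]
  have hsq : Real.sqrt (1 - ρ ^ 2) ^ 2 = 1 - ρ ^ 2 := Real.sq_sqrt (by nlinarith [hρ.1, hρ.2])
  rw [spatialSignCov₁₂, if_neg hρ0]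
  field_simp
  linear_combination (-4 : ℝ) * (1 - Real.sqrt (1 - ρ ^ 2)) * hsq

theorem abs_spatialSignCov₁₂_lt_half {ρ : ℝ} (hρ : ρ ∈ Set.Ioo (-1 : ℝ) 1) :
    |spatialSignCov₁₂ ρ| < 1 / 2 := by
  have ht : 0 < Real.sqrt (1 - ρ ^ 2) := Real.sqrt_pos.2 (by nlinarith [hρ.1, hρ.2])
  have hkey := four_mul_one_add_sqrt_mul_spatialSignCov₁₂_sq hρ
  rw [← abs_of_pos (one_half_pos (α := ℝ)), ← sq_lt_sq]
  nlinarith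

theorem spatialSignCov₁₂_div_quarter_add_sq {ρ : ℝ} (hρ : ρ ∈ Set.Ioo (-1 : ℝ) 1) :
    spatialSignCov₁₂ ρ / (1 / 4 + spatialSignCov₁₂ ρ ^ 2) = ρ := by
  rcases eq_or_ne ρ 0 with rfl | hρ0
  · simp [spatialSignCov₁₂]
  have hsq : Real.sqrt (1 - ρ ^ 2) ^ 2 = 1 - ρ ^ 2 := Real.sq_sqrt (by nlinarith [hρ.1, hρ.2])
  rw [div_eq_iff (by positivity), spatialSignCov₁₂, if_neg hρ0]
  field_simp
  linear_combination (-4 : ℝ) * hsq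

theorem stmt15 (ρ : ℝ) (hρ : ρ ∈ Set.Ioo (-1 : ℝ) 1) :
    let δ := if ρ = 0 then (0 : ℝ) else (1 - Real.sqrt (1 - ρ ^ 2)) / (2 * ρ)
    let s₁₁ : ℝ := 1 / 2
    let s₁₂ := δ
    let d := 1 / 2 + Real.sqrt ((s₁₁ - 1 / 2) ^ 2 + s₁₂ ^ 2)
    let b := d - s₁₁
    let c := (2 * d - 1) / (d * (1 - d))
    c * s₁₂ * b / Real.sqrt ((s₁₂ ^ 2 + b ^ 2) ^ 2 + (s₁₂ * c * b) ^ 2) = ρ := by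
  show spatialSignCorr (1 / 2) (spatialSignCov₁₂ ρ) = ρ
  rw [spatialSignCorr_half_of_abs_lt (abs_spatialSignCov₁₂_lt_half hρ),
    spatialSignCov₁₂_div_quarter_add_sq hρ]
end
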